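/- Let ε ∈ (0, 1/100], δ > 0, and set k = (√2/δ)·√(log(1/(2πε²))). Then for every real x with |x| ≥ δ/2, |½(1 + erf(kx)) − Θ(x)| ≤ ε, where Θ(x) = 1 if x > 0 and Θ(x) = 0 if x < 0. -/

import Mathlib

/-- The real error function `erf(x) = (2/√π) ∫₀ˣ e^{-t²} dt`. -/
noncomputable def erf (x : ℝ) : ℝ :=
  2 / Real.sqrt Real.pi * ∫ t in (0:ℝ)..x, Real.exp (-t ^ 2)

/-!
For `y > 0`, `1 - erf y = (2/√π) ∫_y^∞ e^{-t²} dt ≤ e^{-y²}/(√π y)` (bound `1 ≤ t/y` under the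
integral), and by oddness of `erf` the error of the regulated step at `x` is `(1 - erf (k|x|))/2`.
The choice of `k` makes `e^{-(k|x|)²} ≤ e^{-L/2} = √(2π) ε` with `L = log (1/(2πε²))`, and
`ε ≤ 1/100` gives `L ≥ 1`, hence `k|x| ≥ 1/√2`, which absorbs the remaining factor `1/(√π k|x|)`.
-/

open Real Set MeasureTheory Filter

lemma integrable_exp_neg_sq : Integrable fun t : ℝ => exp (-t ^ 2) := by
  simpa using integrable_exp_neg_mul_sq one_pos

lemma integral_Ioi_mul_exp_neg_sq (y : ℝ) :
    ∫ t in Ioi y, t * exp (-t ^ 2) = exp (-y ^ 2) / 2 := by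
  have hderiv (t : ℝ) : HasDerivAt (fun t => -exp (-t ^ 2) / 2) (t * exp (-t ^ 2)) t := by
    refine (((hasDerivAt_pow 2 t).fun_neg.exp).fun_neg.div_const 2).congr_deriv ?_
    push_cast
    ring
  have hlim : Tendsto (fun t : ℝ => -exp (-t ^ 2) / 2) atTop (nhds 0) := by
    simpa using ((tendsto_exp_atBot.comp
      (tendsto_neg_atTop_atBot.comp (tendsto_pow_atTop two_ne_zero))).neg.div_const 2)
  rw [integral_Ioi_of_hasDerivAt_of_tendsto' (fun t _ => hderiv t)
    (by simpa using (integrable_mul_exp_neg_mul_sq one_pos).integrableOn) hlim]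
  ring

lemma integral_Ioi_exp_neg_sq_le {y : ℝ} (hy : 0 < y) :
    ∫ t in Ioi y, exp (-t ^ 2) ≤ exp (-y ^ 2) / (2 * y) := by
  calc ∫ t in Ioi y, exp (-t ^ 2) ≤ ∫ t in Ioi y, t * exp (-t ^ 2) / y := by
        refine setIntegral_mono_on integrable_exp_neg_sq.integrableOn
          (by simpa using ((integrable_mul_exp_neg_mul_sq one_pos).div_const y).integrableOn)
          measurableSet_Ioi fun t (ht : y < t) => ?_
        rw [mul_div_right_comm]
        exact le_mul_of_one_le_left (exp_pos _).le ((one_le_div hy).2 ht.le)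
    _ = exp (-y ^ 2) / (2 * y) := by
        rw [integral_div, integral_Ioi_mul_exp_neg_sq, div_div]

lemma erf_eq_one_sub_integral_Ioi (y : ℝ) :
    erf y = 1 - 2 / √π * ∫ t in Ioi y, exp (-t ^ 2) := by
  have hhalf : ∫ t in Ioi (0 : ℝ), exp (-t ^ 2) = √π / 2 := by
    simpa using integral_gaussian_Ioi 1
  rw [erf, ← intervalIntegral.integral_Ioi_sub_Ioi' integrable_exp_neg_sq.integrableOn
    integrable_exp_neg_sq.integrableOn, hhalf]
  have : 0 < √π := sqrt_pos.2 pi_pos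
  field_simp

lemma erf_le_one (y : ℝ) : erf y ≤ 1 := by
  rw [erf_eq_one_sub_integral_Ioi, sub_le_self_iff]
  exact mul_nonneg (by positivity) (setIntegral_nonneg measurableSet_Ioi fun t _ => (exp_pos _).le)

lemma one_sub_erf_le {y : ℝ} (hy : 0 < y) : 1 - erf y ≤ exp (-y ^ 2) / (√π * y) := by
  have : 0 < √π := sqrt_pos.2 pi_pos
  calc 1 - erf y = 2 / √π * ∫ t in Ioi y, exp (-t ^ 2) := by
        rw [erf_eq_one_sub_integral_Ioi]; ring
    _ ≤ 2 / √π * (exp (-y ^ 2) / (2 * y)) := by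
        gcongr; exact integral_Ioi_exp_neg_sq_le hy
    _ = exp (-y ^ 2) / (√π * y) := by field_simp

lemma erf_neg (y : ℝ) : erf (-y) = -erf y := by
  have h := intervalIntegral.integral_comp_neg (a := 0) (b := y) fun t => exp (-t ^ 2)
  simp only [neg_sq, neg_zero] at h
  rw [erf, erf, h, intervalIntegral.integral_symm]
  ring

lemma abs_half_one_add_erf_mul_sub_ite (c x : ℝ) :
    |(1 + erf (c * x)) / 2 - (if 0 < x then (1 : ℝ) else 0)| = (1 - erf (c * |x|)) / 2 := by
  have hnonneg (y : ℝ) : 0 ≤ (1 - erf y) / 2 := by linarith [erf_le_one y]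
  rcases le_or_gt x 0 with hneg | hpos
  · rw [if_neg hneg.not_gt, abs_of_nonpos hneg, ← abs_of_nonneg (hnonneg _), mul_neg, erf_neg,
      sub_zero, sub_neg_eq_add]
  · rw [if_pos hpos, abs_of_pos hpos, ← abs_of_nonneg (hnonneg _), ← abs_neg]
    congr 1; ring

lemma half_one_sub_erf_le_exp_neg_sq_div {y : ℝ} (hy : 1 / 2 ≤ y ^ 2) (hy0 : 0 < y) :
    (1 - erf y) / 2 ≤ exp (-y ^ 2) / √(2 * π) := by
  have hsqrt : √(2 * π) ≤ 2 * √π * y := by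
    have h2 : √2 ≤ 2 * y := sqrt_le_iff.2 ⟨by positivity, by nlinarith⟩
    rw [sqrt_mul zero_le_two, mul_right_comm]
    gcongr
  calc (1 - erf y) / 2 ≤ exp (-y ^ 2) / (√π * y) / 2 := by gcongr; exact one_sub_erf_le hy0
    _ = exp (-y ^ 2) / (2 * √π * y) := by ring
    _ ≤ exp (-y ^ 2) / √(2 * π) := by gcongr

lemma one_le_log_inv_two_pi_mul_sq {ε : ℝ} (hε : ε ∈ Ioc (0 : ℝ) (1 / 100)) :
    1 ≤ log (1 / (2 * π * ε ^ 2)) := by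
  obtain ⟨hε0, hε1⟩ := hε
  have hsq : ε ^ 2 ≤ 1 / 10000 := by nlinarith
  rw [le_log_iff_exp_le (by positivity), le_div_iff₀ (by positivity)]
  calc exp 1 * (2 * π * ε ^ 2) ≤ 3 * (2 * 4 * (1 / 10000)) := by
        gcongr
        exacts [exp_one_lt_three.le, pi_lt_four.le]
    _ ≤ 1 := by norm_num

lemma exp_neg_sq_le_sqrt_two_pi_mul {ε y : ℝ} (hε : 0 < ε)
    (hy : log (1 / (2 * π * ε ^ 2)) / 2 ≤ y ^ 2) :
    exp (-y ^ 2) ≤ √(2 * π) * ε := by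
  have hexp : exp (-log (1 / (2 * π * ε ^ 2))) = 2 * π * ε ^ 2 := by
    rw [one_div, log_inv, neg_neg, exp_log (by positivity)]
  calc exp (-y ^ 2) ≤ exp (-log (1 / (2 * π * ε ^ 2)) / 2) := by gcongr; linarith
    _ = √(2 * π) * ε := by
        rw [exp_half, hexp, sqrt_mul (by positivity), sqrt_sq hε.le]

/-- With `k = (√2/δ)·√(log(1/(2πε²)))`, the regulated step `Θ_k(x) = ½(1 + erf(kx))`
is within `ε` of the unit step `Θ` whenever `|x| ≥ δ/2`. -/
theorem regulated_step_accuracy (ε δ : ℝ) (hε : ε ∈ Set.Ioc (0 : ℝ) (1 / 100))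
    (hδ : 0 < δ) (x : ℝ) (hx : δ / 2 ≤ |x|) :
    |(1 + erf (Real.sqrt 2 / δ * Real.sqrt (Real.log (1 / (2 * Real.pi * ε ^ 2))) * x)) / 2 -
        (if 0 < x then (1 : ℝ) else 0)| ≤ ε := by
  set L := log (1 / (2 * π * ε ^ 2))
  have hL : 1 ≤ L := one_le_log_inv_two_pi_mul_sq hε
  set y := √2 / δ * √L * |x|
  have hy : L / 2 ≤ y ^ 2 := by
    have hx2 : δ ^ 2 / 4 ≤ |x| ^ 2 := by nlinarith
    have : y ^ 2 = 2 * L * |x| ^ 2 / δ ^ 2 := by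
      simp only [y, mul_pow, div_pow, sq_sqrt zero_le_two, sq_sqrt (by linarith : 0 ≤ L)]
      ring
    rw [this, le_div_iff₀ (by positivity)]
    nlinarith
  have hy0 : 0 < y := by
    have : 0 < |x| := by linarith
    positivity
  have h2π : 0 < √(2 * π) := by positivity
  rw [abs_half_one_add_erf_mul_sub_ite]
  calc (1 - erf y) / 2 ≤ exp (-y ^ 2) / √(2 * π) :=
        half_one_sub_erf_le_exp_neg_sq_div (by linarith) hy0
    _ ≤ √(2 * π) * ε / √(2 * π) := by gcongr; exact exp_neg_sq_le_sqrt_two_pi_mul hε.1 hy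
    _ = ε := by field_simp
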